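/- Let B = k[x_1,…,x_n,y_1,…,y_m,z] be a polynomial ring and A the k-subalgebra generated by y_1,…,y_m, z, the polynomials x_i^2 + x_i z and x_i^3 + x_i^2 z for i = 1,…,n, and the monomials x_1^{i_1}⋯x_n^{i_n} y_j with each i_k ≤ 1 and j = 1,…,m. Then every monomial x_1^{i_1}⋯x_n^{i_n} y_1^{j_1}⋯y_m^{j_m} with j_1+⋯+j_m > 0 belongs to A. -/
import Mathlib


open MvPolynomial

/-- The variables of `B_{n,m} = k[x_1,…,x_n,y_1,…,y_m,z]`. -/
abbrev BonnetVars (n m : ℕ) := Fin n ⊕ Fin m ⊕ Unit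

variable (k : Type*) [Field k] (n m : ℕ)

/-- The variable `x_i`. -/
noncomputable def Xv (i : Fin n) : MvPolynomial (BonnetVars n m) k := X (Sum.inl i)
/-- The variable `y_j`. -/
noncomputable def Yv (j : Fin m) : MvPolynomial (BonnetVars n m) k := X (Sum.inr (Sum.inl j))
/-- The variable `z`. -/
noncomputable def Zv : MvPolynomial (BonnetVars n m) k := X (Sum.inr (Sum.inr ()))

/-- The generators of the subalgebra `A_{n,m}`: the `y_j`, `z`, the polynomials
`x_i^2 + x_i z` and `x_i^3 + x_i^2 z`, and the monomials `x_1^{i_1}⋯x_n^{i_n} y_j`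
with all `i_k ≤ 1`. -/
noncomputable def AnmGens : Set (MvPolynomial (BonnetVars n m) k) :=
  Set.range (Yv k n m) ∪ {Zv k n m}
    ∪ Set.range (fun i => Xv k n m i ^ 2 + Xv k n m i * Zv k n m)
    ∪ Set.range (fun i => Xv k n m i ^ 3 + Xv k n m i ^ 2 * Zv k n m)
    ∪ {p | ∃ (s : Finset (Fin n)) (j : Fin m), p = (∏ i ∈ s, Xv k n m i) * Yv k n m j}

/-- The subalgebra `A_{n,m}` of `B_{n,m}`. -/
noncomputable def Anm : Subalgebra k (MvPolynomial (BonnetVars n m) k) :=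
  Algebra.adjoin k (AnmGens k n m)

lemma Yv_mem (j : Fin m) : Yv k n m j ∈ Anm k n m :=
  Algebra.subset_adjoin (by left; left; left; left; exact ⟨j, rfl⟩)

lemma Zv_mem : Zv k n m ∈ Anm k n m :=
  Algebra.subset_adjoin (by left; left; left; right; rfl)

lemma sq_mem (i : Fin n) : Xv k n m i ^ 2 + Xv k n m i * Zv k n m ∈ Anm k n m :=
  Algebra.subset_adjoin (by left; left; right; exact ⟨i, rfl⟩)

lemma prodXY_mem (s : Finset (Fin n)) (j : Fin m) :
    (∏ i ∈ s, Xv k n m i) * Yv k n m j ∈ Anm k n m :=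
  Algebra.subset_adjoin (Or.inr ⟨s, j, rfl⟩)

lemma key_mem (N : ℕ) : ∀ (iv : Fin n → ℕ), (∑ i, iv i) ≤ N → ∀ j : Fin m,
    (∏ i, Xv k n m i ^ iv i) * Yv k n m j ∈ Anm k n m := by
  induction N with
  | zero =>
    intro iv hiv j
    have h0 : ∀ i, iv i = 0 := by
      intro i
      have := Finset.single_le_sum (f := iv) (fun _ _ => Nat.zero_le _) (Finset.mem_univ i)
      omega
    simp only [h0, pow_zero, Finset.prod_const_one, one_mul]
    exact Yv_mem k n m j
  | succ N ih =>
    intro iv hiv j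
    by_cases h1 : ∀ i, iv i ≤ 1
    · have e : (∏ i, Xv k n m i ^ iv i)
          = ∏ i ∈ Finset.univ.filter (fun i => iv i = 1), Xv k n m i := by
        rw [Finset.prod_filter]
        refine Finset.prod_congr rfl fun i _ => ?_
        have := h1 i
        interval_cases (iv i) <;> simp
      rw [e]
      exact prodXY_mem k n m _ j
    · push_neg at h1
      obtain ⟨i0, hi0⟩ := h1
      have h2 : 2 ≤ iv i0 := by omega
      set iv1 := Function.update iv i0 (iv i0 - 2) with hiv1
      set iv2 := Function.update iv i0 (iv i0 - 1) with hiv2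
      have hsum : ∑ i, iv i = iv i0 + ∑ i ∈ Finset.univ.erase i0, iv i := by
        rw [Finset.add_sum_erase _ _ (Finset.mem_univ i0)]
      have hs1 : ∑ i, iv1 i ≤ N := by
        rw [hiv1, Finset.sum_update_of_mem (Finset.mem_univ i0)]
        simp only [Finset.sdiff_singleton_eq_erase] at *
        omega
      have hs2 : ∑ i, iv2 i ≤ N := by
        rw [hiv2, Finset.sum_update_of_mem (Finset.mem_univ i0)]
        simp only [Finset.sdiff_singleton_eq_erase] at *
        omega
      have p0 : (∏ i, Xv k n m i ^ iv i)
          = Xv k n m i0 ^ iv i0 * ∏ i ∈ Finset.univ.erase i0, Xv k n m i ^ iv i :=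
        (Finset.mul_prod_erase _ _ (Finset.mem_univ i0)).symm
      have p1 : (∏ i, Xv k n m i ^ iv1 i)
          = Xv k n m i0 ^ (iv i0 - 2) * ∏ i ∈ Finset.univ.erase i0, Xv k n m i ^ iv i := by
        rw [← Finset.mul_prod_erase _ _ (Finset.mem_univ i0)]
        congr 1
        · rw [hiv1, Function.update_self]
        · refine Finset.prod_congr rfl fun i hi => ?_
          rw [hiv1, Function.update_of_ne (Finset.ne_of_mem_erase hi)]
      have p2 : (∏ i, Xv k n m i ^ iv2 i)
          = Xv k n m i0 ^ (iv i0 - 1) * ∏ i ∈ Finset.univ.erase i0, Xv k n m i ^ iv i := by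
        rw [← Finset.mul_prod_erase _ _ (Finset.mem_univ i0)]
        congr 1
        · rw [hiv2, Function.update_self]
        · refine Finset.prod_congr rfl fun i hi => ?_
          rw [hiv2, Function.update_of_ne (Finset.ne_of_mem_erase hi)]
      have e1 : (∏ i, Xv k n m i ^ iv i) * Yv k n m j =
          (Xv k n m i0 ^ 2 + Xv k n m i0 * Zv k n m) * ((∏ i, Xv k n m i ^ iv1 i) * Yv k n m j)
            - Zv k n m * ((∏ i, Xv k n m i ^ iv2 i) * Yv k n m j) := by
        rw [p0, p1, p2]
        have hpow : Xv k n m i0 ^ iv i0 = Xv k n m i0 ^ 2 * Xv k n m i0 ^ (iv i0 - 2) := by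
          rw [← pow_add]; congr 1; omega
        have hpow2 : Xv k n m i0 ^ (iv i0 - 1) = Xv k n m i0 * Xv k n m i0 ^ (iv i0 - 2) := by
          rw [← pow_succ']; congr 1; omega
        rw [hpow, hpow2]; ring
      rw [e1]
      exact sub_mem (mul_mem (sq_mem k n m i0) (ih iv1 hs1 j))
        (mul_mem (Zv_mem k n m) (ih iv2 hs2 j))

/-- Every monomial `x_1^{i_1}⋯x_n^{i_n} y_1^{j_1}⋯y_m^{j_m}` with
`j_1 + ⋯ + j_m > 0` belongs to `A_{n,m}`. -/
theorem monomial_mem_Anm (iv : Fin n → ℕ) (jv : Fin m → ℕ) (h : 0 < ∑ j, jv j) :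
    (∏ i, Xv k n m i ^ iv i) * ∏ j, Yv k n m j ^ jv j ∈ Anm k n m := by
  obtain ⟨j0, -, hj0⟩ := Finset.exists_ne_zero_of_sum_ne_zero (by omega :
    ∑ j, jv j ≠ 0)
  have e : (∏ i, Xv k n m i ^ iv i) * ∏ j, Yv k n m j ^ jv j
      = ((∏ i, Xv k n m i ^ iv i) * Yv k n m j0)
        * (Yv k n m j0 ^ (jv j0 - 1) * ∏ j ∈ Finset.univ.erase j0, Yv k n m j ^ jv j) := by
    rw [← Finset.mul_prod_erase _ _ (Finset.mem_univ j0)]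
    have : Yv k n m j0 ^ jv j0 = Yv k n m j0 * Yv k n m j0 ^ (jv j0 - 1) := by
      rw [← pow_succ']; congr 1; omega
    rw [this]; ring
  rw [e]
  exact mul_mem (key_mem k n m (∑ i, iv i) iv le_rfl j0)
    (mul_mem (pow_mem (Yv_mem k n m j0) _)
      (prod_mem fun j _ => pow_mem (Yv_mem k n m j) _))
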